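/- Let T be a triangulated category, N a triangulated subcategory of T, and (U, X, V) an N-localization triple of T satisfying the Verdier condition, with X closed under direct summands. Then for every morphism s: A → B with A, B ∈ U ∩ V and every distinguished triangle A →(s) B → C → A[1], the following are equivalent: (i) C ∈ N; (ii) there exists a morphism t: B → A such that 1_A − t∘s and 1_B − s∘t both factor through X. -/

import Mathlib

/-!
For (ii) ⇒ (i), write `𝟙 A - s ≫ t = a ≫ b` and `𝟙 B - t ≫ s = c ≫ d` through objects of
`X ⊆ N`. The endomorphism `(e², f²)` of the arrow `s`,
where `e = a ≫ b` and `f = c ≫ d`, factors through the arrow `b ≫ s ≫ c` between objects of `N`.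
Any completion of `(e², f²)` to the cone `C` of `s` is the identity up to a square-zero error, hence
invertible, so `C` is a retract of the cone of `b ≫ s ≫ c`, which lies in `N`.

It remains to see that `N` is closed under retracts. If `𝟙 D` factors through `N`, the same holds
for the `U`-precover `Q` of `D` and then for the `V`-preenvelope `R ∈ U ∩ V` of `Q`, because the
third terms of their triangles lie in `N`. Between objects of `U` and `V` a factorization through
`N` can be moved into `X`, so `R ∈ X` as `X` is closed under summands, and `D ∈ N` follows along
the two triangles.
-/

open CategoryTheory Category Limits Pretriangulated

universe v u

variable {T : Type u} [Category.{v} T] [HasZeroObject T] [HasShift T ℤ]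
  [Preadditive T] [∀ n : ℤ, (CategoryTheory.shiftFunctor T n).Additive] [Pretriangulated T]

namespace VerdierPaper

/-- A morphism factors through the subcategory `X`. -/
def FactorsThru (X : Set T) {A B : T} (f : A ⟶ B) : Prop :=
  ∃ (X₀ : T) (_ : X₀ ∈ X) (g : A ⟶ X₀) (h : X₀ ⟶ B), f = g ≫ h

/-- A triangulated subcategory: closed under isomorphisms, shifts in both directions,
contains a zero object, and two-out-of-three for distinguished triangles. -/
structure IsTriangulatedSub (N : Set T) : Prop where
  zero : ∃ Z ∈ N, IsZero Z
  closedIso : ∀ {A B : T}, (A ≅ B) → A ∈ N → B ∈ N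
  shift : ∀ A ∈ N, (A⟦(1 : ℤ)⟧) ∈ N
  unshift : ∀ A ∈ N, (A⟦(-1 : ℤ)⟧) ∈ N
  two_of_three₁₂ : ∀ Tr ∈ (distTriang T), Tr.obj₁ ∈ N → Tr.obj₂ ∈ N → Tr.obj₃ ∈ N
  two_of_three₂₃ : ∀ Tr ∈ (distTriang T), Tr.obj₂ ∈ N → Tr.obj₃ ∈ N → Tr.obj₁ ∈ N
  two_of_three₁₃ : ∀ Tr ∈ (distTriang T), Tr.obj₁ ∈ N → Tr.obj₃ ∈ N → Tr.obj₂ ∈ N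

/-- Closed under direct summands (retracts). -/
def ClosedUnderSummands (S : Set T) : Prop :=
  ∀ (X₀ A : T), X₀ ∈ S → ∀ (i : A ⟶ X₀) (r : X₀ ⟶ A), i ≫ r = 𝟙 A → A ∈ S

/-- `f : A ⟶ B` is `X`-monic: every morphism from `A` to an object of `X` extends along `f`. -/
def XMonic (X : Set T) {A B : T} (f : A ⟶ B) : Prop :=
  ∀ X₀ ∈ X, ∀ g : A ⟶ X₀, ∃ h : B ⟶ X₀, f ≫ h = g

/-- `f : A ⟶ B` is `X`-epic: every morphism from an object of `X` to `B` lifts along `f`. -/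
def XEpic (X : Set T) {A B : T} (f : A ⟶ B) : Prop :=
  ∀ X₀ ∈ X, ∀ g : X₀ ⟶ B, ∃ h : X₀ ⟶ A, h ≫ f = g

/-- An `X`-preenvelope: an `X`-monic with target in `X`. -/
def Preenvelope (X : Set T) {A X₀ : T} (f : A ⟶ X₀) : Prop :=
  X₀ ∈ X ∧ XMonic X f

/-- An `X`-precover: an `X`-epic with source in `X`. -/
def Precover (X : Set T) {X₀ B : T} (f : X₀ ⟶ B) : Prop :=
  X₀ ∈ X ∧ XEpic X f

/-- `U^{⊥,X}`: objects such that every morphism from an object of `U` factors through `X`. -/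
def perpRightX (U X : Set T) : Set T :=
  {W | ∀ U₀ ∈ U, ∀ f : U₀ ⟶ W, FactorsThru X f}

/-- `^{X,⊥}V`: objects such that every morphism to an object of `V` factors through `X`. -/
def perpLeftX (X V : Set T) : Set T :=
  {W | ∀ V₀ ∈ V, ∀ f : W ⟶ V₀, FactorsThru X f}

/-- A localization triple `(U, X, V)` of `T`. Triangles `A[-1] → W → Q → A` are
recorded in the rotated form `W → Q → A → W[1]`. -/
structure IsLocalizationTriple (U X V : Set T) : Prop where
  subU : X ⊆ U
  subV : X ⊆ V
  precover : ∀ A : T, ∃ (W Q : T) (w : W ⟶ Q) (r : Q ⟶ A) (d : A ⟶ W⟦(1 : ℤ)⟧),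
    Triangle.mk w r d ∈ (distTriang T) ∧ Precover U r ∧ W ∈ perpRightX U X
  preenvelope : ∀ A : T, ∃ (R W : T) (j : A ⟶ R) (t : R ⟶ W) (d : W ⟶ A⟦(1 : ℤ)⟧),
    Triangle.mk j t d ∈ (distTriang T) ∧ Preenvelope V j ∧ W ∈ perpLeftX X V
  precoverV : ∀ A ∈ V, ∃ (W Q : T) (w : W ⟶ Q) (r : Q ⟶ A) (d : A ⟶ W⟦(1 : ℤ)⟧),
    Triangle.mk w r d ∈ (distTriang T) ∧ Precover U r ∧ W ∈ perpRightX U X ∧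
    Q ∈ U ∩ V ∧ W ∈ V ∧ W ∈ perpRightX (U ∩ V) X
  preenvelopeU : ∀ A ∈ U, ∃ (R W : T) (j : A ⟶ R) (t : R ⟶ W) (d : W ⟶ A⟦(1 : ℤ)⟧),
    Triangle.mk j t d ∈ (distTriang T) ∧ Preenvelope V j ∧ W ∈ perpLeftX X V ∧
    R ∈ U ∩ V ∧ W ∈ U ∧ W ∈ perpLeftX X (U ∩ V)

/-- An `N`-localization triple. -/
structure IsNLocalizationTriple (N U X V : Set T) extends IsLocalizationTriple U X V : Prop where
  xEq : X = U ∩ V ∩ N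
  perpR_subset : perpRightX U X ⊆ N
  perpL_subset : perpLeftX X V ⊆ N

/-- The Verdier condition for an `N`-localization triple. -/
def VerdierCondition (N U X V : Set T) : Prop :=
  ∀ (A B N₀ : T) (s : A ⟶ B) (g : B ⟶ N₀) (h : N₀ ⟶ A⟦(1 : ℤ)⟧),
    Triangle.mk s g h ∈ (distTriang T) → A ∈ U ∩ V → B ∈ U ∩ V → N₀ ∈ N →
    ∃ t : B ⟶ A, FactorsThru X (𝟙 A - s ≫ t) ∧ FactorsThru X (𝟙 B - t ≫ s)

section FactorsThru

variable {C : Type*} [Category C] {S S' : Set C}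

lemma factorsThru_comp {M A B : C} (hM : M ∈ S) (f : A ⟶ M) (g : M ⟶ B) :
    FactorsThru S (f ≫ g) :=
  ⟨M, hM, f, g, rfl⟩

lemma FactorsThru.precomp {P A B : C} {f : A ⟶ B} (hf : FactorsThru S f) (e : P ⟶ A) :
    FactorsThru S (e ≫ f) := by
  obtain ⟨M, hM, u, v, rfl⟩ := hf
  simpa using factorsThru_comp hM (e ≫ u) v

lemma FactorsThru.postcomp {A B P : C} {f : A ⟶ B} (hf : FactorsThru S f) (e : B ⟶ P) :
    FactorsThru S (f ≫ e) := by
  obtain ⟨M, hM, u, v, rfl⟩ := hf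
  simpa using factorsThru_comp hM u (v ≫ e)

lemma FactorsThru.mono (hSS' : S ⊆ S') {A B : C} {f : A ⟶ B} (hf : FactorsThru S f) :
    FactorsThru S' f := by
  obtain ⟨M, hM, u, v, rfl⟩ := hf
  exact factorsThru_comp (hSS' hM) u v

lemma ClosedUnderSummands.mem_of_factorsThru_id (hS : ClosedUnderSummands S) {D : C}
    (hD : FactorsThru S (𝟙 D)) : D ∈ S := by
  obtain ⟨M, hM, i, r, hir⟩ := hD
  exact hS M D hM i r hir.symm

end FactorsThru

section Pretriangulated

lemma isIso_of_mor₂_comp_eq_of_comp_mor₃_eq {Tr : Triangle T} (hTr : Tr ∈ distTriang T)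
    (φ : Tr.obj₃ ⟶ Tr.obj₃) (h₂ : Tr.mor₂ ≫ φ = Tr.mor₂) (h₃ : φ ≫ Tr.mor₃ = Tr.mor₃) :
    IsIso φ := by
  set ν := 𝟙 _ - φ with hν
  obtain ⟨α, hα⟩ := Triangle.coyoneda_exact₃ _ hTr ν (by simp [hν, h₃])
  obtain ⟨β, hβ⟩ := Triangle.yoneda_exact₃ _ hTr ν (by simp [hν, h₂])
  have hνν : ν ≫ ν = 0 := by
    calc ν ≫ ν = α ≫ (Tr.mor₂ ≫ Tr.mor₃) ≫ β := by rw [assoc, ← hβ, ← assoc, ← hα]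
      _ = 0 := by simp [comp_distTriang_mor_zero₂₃ _ hTr]
  have hφ : φ = 𝟙 _ - ν := by simp [hν]
  refine ⟨𝟙 _ + ν, ?_, ?_⟩ <;>
    simp [hφ, Preadditive.sub_comp, Preadditive.comp_add, hνν]

lemma exists_retract_obj₃_of_factorization {T₁ T₂ : Triangle T} (h₁ : T₁ ∈ distTriang T)
    (h₂ : T₂ ∈ distTriang T) (u₁ : T₁.obj₁ ⟶ T₂.obj₁) (u₂ : T₁.obj₂ ⟶ T₂.obj₂)
    (v₁ : T₂.obj₁ ⟶ T₁.obj₁) (v₂ : T₂.obj₂ ⟶ T₁.obj₂)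
    (hu : T₁.mor₁ ≫ u₂ = u₁ ≫ T₂.mor₁) (hv : T₂.mor₁ ≫ v₂ = v₁ ≫ T₁.mor₁)
    (huv₂ : (u₂ ≫ v₂) ≫ T₁.mor₂ = T₁.mor₂) (huv₁ : T₁.mor₃ ≫ (u₁ ≫ v₁)⟦(1 : ℤ)⟧' = T₁.mor₃) :
    ∃ (i : T₁.obj₃ ⟶ T₂.obj₃) (r : T₂.obj₃ ⟶ T₁.obj₃), i ≫ r = 𝟙 _ := by
  obtain ⟨γ₁, hγ₁₂, hγ₁₃⟩ := complete_distinguished_triangle_morphism T₁ T₂ h₁ h₂ u₁ u₂ hu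
  obtain ⟨γ₂, hγ₂₂, hγ₂₃⟩ := complete_distinguished_triangle_morphism T₂ T₁ h₂ h₁ v₁ v₂ hv
  have : IsIso (γ₁ ≫ γ₂) := isIso_of_mor₂_comp_eq_of_comp_mor₃_eq h₁ _
    (by rw [reassoc_of% hγ₁₂, hγ₂₂]; simpa using huv₂)
    (by rw [assoc, ← hγ₂₃, ← reassoc_of% hγ₁₃, ← Functor.map_comp, huv₁])
  exact ⟨γ₁, γ₂ ≫ inv (γ₁ ≫ γ₂), by rw [← assoc, IsIso.hom_inv_id]⟩

end Pretriangulated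

namespace IsTriangulatedSub

variable {N U V : Set T}

lemma biprod_mem (hN : IsTriangulatedSub N) {A B : T} (hA : A ∈ N) (hB : B ∈ N) :
    (A ⊞ B) ∈ N :=
  hN.two_of_three₁₃ _ (binaryBiproductTriangle_distinguished A B) hA hB

lemma factorsThru_add (hN : IsTriangulatedSub N) {A B : T} {f g : A ⟶ B}
    (hf : FactorsThru N f) (hg : FactorsThru N g) : FactorsThru N (f + g) := by
  obtain ⟨M₁, hM₁, u₁, v₁, rfl⟩ := hf
  obtain ⟨M₂, hM₂, u₂, v₂, rfl⟩ := hg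
  simpa using factorsThru_comp (hN.biprod_mem hM₁ hM₂) (biprod.lift u₁ u₂) (biprod.desc v₁ v₂)

lemma mem_of_inverse_modulo (hN : IsTriangulatedSub N) (hNsumm : ClosedUnderSummands N)
    {A B C : T} {s : A ⟶ B} {g : B ⟶ C} {h : C ⟶ A⟦(1 : ℤ)⟧}
    (hT : Triangle.mk s g h ∈ distTriang T) (t : B ⟶ A)
    (hst : FactorsThru N (𝟙 A - s ≫ t)) (hts : FactorsThru N (𝟙 B - t ≫ s)) : C ∈ N := by
  obtain ⟨X₀, hX₀, a, b, hab⟩ := hst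
  obtain ⟨X₁, hX₁, c, d, hcd⟩ := hts
  have hsg : s ≫ g = 0 := comp_distTriang_mor_zero₁₂ _ hT
  have hhs : h ≫ s⟦(1 : ℤ)⟧' = 0 := comp_distTriang_mor_zero₃₁ _ hT
  have hs : a ≫ b ≫ s = s ≫ c ≫ d := by
    simp [← reassoc_of% hab, ← hcd, Preadditive.sub_comp, Preadditive.comp_sub]
  have hg : c ≫ d ≫ g = g := by
    simp [← reassoc_of% hcd, Preadditive.sub_comp, hsg]
  have hh : h ≫ (a ≫ b)⟦(1 : ℤ)⟧' = h := by
    rw [← hab, Functor.map_sub, Preadditive.comp_sub, Functor.map_comp, reassoc_of% hhs]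
    simp
  obtain ⟨R, v, w, hm⟩ := distinguished_cocone_triangle (b ≫ s ≫ c)
  have hu : s ≫ c ≫ d ≫ c = a ≫ b ≫ s ≫ c := by simp [← reassoc_of% hs]
  have hv : (b ≫ s ≫ c) ≫ d = (b ≫ a ≫ b) ≫ s := by simp [hs]
  have huv₂ : ((c ≫ d ≫ c) ≫ d) ≫ g = g := by simp [hg]
  have huv₁ : h ≫ (a ≫ b ≫ a ≫ b)⟦(1 : ℤ)⟧' = h := by
    rw [← assoc, Functor.map_comp, reassoc_of% hh, hh]
  obtain ⟨i, r, hir⟩ :=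
    exists_retract_obj₃_of_factorization hT hm a (c ≫ d ≫ c) (b ≫ a ≫ b) d hu hv huv₂ huv₁
  exact hNsumm R C (hN.two_of_three₁₂ _ hm hX₀ hX₁) i r hir

lemma factorsThru_id_of_xEpic (hN : IsTriangulatedSub N) {W Q D : T} {w : W ⟶ Q}
    {r : Q ⟶ D} {δ : D ⟶ W⟦(1 : ℤ)⟧} (hT : Triangle.mk w r δ ∈ distTriang T) (hW : W ∈ N)
    (hr : XEpic U r) (hrN : FactorsThru (U ∩ N) r) : FactorsThru N (𝟙 Q) := by
  obtain ⟨M, ⟨hMU, hMN⟩, σ, ρ, hσρ⟩ := hrN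
  obtain ⟨ρ', rfl⟩ := hr M hMU ρ
  have hκ : (𝟙 Q - σ ≫ ρ') ≫ r = 0 := by
    rw [Preadditive.sub_comp, assoc, ← hσρ, id_comp, sub_self]
  obtain ⟨χ, hχ⟩ := Triangle.coyoneda_exact₂ _ hT _ hκ
  rw [show 𝟙 Q = σ ≫ ρ' + χ ≫ w by rw [← sub_eq_iff_eq_add']; exact hχ]
  exact hN.factorsThru_add (factorsThru_comp hMN σ ρ') (factorsThru_comp hW χ w)

lemma factorsThru_id_of_xMonic (hN : IsTriangulatedSub N) {D R W : T} {j : D ⟶ R}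
    {τ : R ⟶ W} {δ : W ⟶ D⟦(1 : ℤ)⟧} (hT : Triangle.mk j τ δ ∈ distTriang T) (hW : W ∈ N)
    (hj : XMonic V j) (hjN : FactorsThru (V ∩ N) j) : FactorsThru N (𝟙 R) := by
  obtain ⟨M, ⟨hMV, hMN⟩, θ, ν, hθν⟩ := hjN
  obtain ⟨θ', rfl⟩ := hj M hMV θ
  have hκ : j ≫ (𝟙 R - θ' ≫ ν) = 0 := by
    rw [Preadditive.comp_sub, ← assoc, ← hθν, comp_id, sub_self]
  obtain ⟨ψ, hψ⟩ := Triangle.yoneda_exact₂ _ hT _ hκ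
  rw [show 𝟙 R = θ' ≫ ν + τ ≫ ψ by rw [← sub_eq_iff_eq_add']; exact hψ]
  exact hN.factorsThru_add (factorsThru_comp hMN θ' ν) (factorsThru_comp hW τ ψ)

end IsTriangulatedSub

namespace IsNLocalizationTriple

variable {N U X V : Set T}

lemma subset (hLoc : IsNLocalizationTriple N U X V) : X ⊆ N := by
  rw [hLoc.xEq]
  exact Set.inter_subset_right

lemma factorsThru_inter_left (hN : IsTriangulatedSub N) (hLoc : IsNLocalizationTriple N U X V)
    {P D : T} (hP : P ∈ U) {f : P ⟶ D} (hf : FactorsThru N f) : FactorsThru (U ∩ N) f := by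
  obtain ⟨M, hM, f₁, f₂, rfl⟩ := hf
  obtain ⟨W, Q, w, r, δ, hT, ⟨hQ, hr⟩, hW⟩ := hLoc.precover M
  obtain ⟨σ, rfl⟩ := hr P hP f₁
  have hQN : Q ∈ N := hN.two_of_three₁₃ _ hT (hLoc.perpR_subset hW) hM
  simpa using factorsThru_comp (S := U ∩ N) ⟨hQ, hQN⟩ σ (r ≫ f₂)

lemma factorsThru_inter_right (hN : IsTriangulatedSub N) (hLoc : IsNLocalizationTriple N U X V)
    {D Z : T} (hZ : Z ∈ V) {f : D ⟶ Z} (hf : FactorsThru N f) : FactorsThru (V ∩ N) f := by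
  obtain ⟨M, hM, f₁, f₂, rfl⟩ := hf
  obtain ⟨R, W, j, τ, δ, hT, ⟨hR, hj⟩, hW⟩ := hLoc.preenvelope M
  obtain ⟨ν, rfl⟩ := hj Z hZ f₂
  have hRN : R ∈ N := hN.two_of_three₁₃ _ hT hM (hLoc.perpL_subset hW)
  simpa using factorsThru_comp (S := V ∩ N) ⟨hR, hRN⟩ (f₁ ≫ j) ν

lemma factorsThru_of_factorsThru (hN : IsTriangulatedSub N)
    (hLoc : IsNLocalizationTriple N U X V) {P Z : T} (hP : P ∈ U) (hZ : Z ∈ V) {f : P ⟶ Z}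
    (hf : FactorsThru N f) : FactorsThru X f := by
  obtain ⟨Q, ⟨hQU, hQN⟩, σ, ρ, rfl⟩ := hLoc.factorsThru_inter_left hN hP hf
  obtain ⟨R, W, j, τ, δ, hT, ⟨-, hj⟩, hW, hR, -, -⟩ := hLoc.preenvelopeU Q hQU
  obtain ⟨ρ', rfl⟩ := hj Z hZ ρ
  have hRX : R ∈ X := by
    rw [hLoc.xEq]
    exact ⟨hR, hN.two_of_three₁₃ _ hT hQN (hLoc.perpL_subset hW)⟩
  simpa using factorsThru_comp hRX (σ ≫ j) ρ'

lemma closedUnderSummands (hN : IsTriangulatedSub N) (hLoc : IsNLocalizationTriple N U X V)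
    (hXsumm : ClosedUnderSummands X) : ClosedUnderSummands N := by
  intro M D hM i p hip
  have hD : FactorsThru N (𝟙 D) := hip ▸ factorsThru_comp hM i p
  obtain ⟨W₁, Q, w₁, r, δ₁, hT₁, ⟨hQ, hr⟩, hW₁⟩ := hLoc.precover D
  have hQid : FactorsThru N (𝟙 Q) := hN.factorsThru_id_of_xEpic hT₁ (hLoc.perpR_subset hW₁) hr
    (hLoc.factorsThru_inter_left hN hQ (by simpa using hD.precomp r))
  obtain ⟨R, W₂, j, τ, δ₂, hT₂, ⟨hRV, hj⟩, hW₂, hR, -, -⟩ := hLoc.preenvelopeU Q hQ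
  have hRid : FactorsThru N (𝟙 R) := hN.factorsThru_id_of_xMonic hT₂ (hLoc.perpL_subset hW₂) hj
    (hLoc.factorsThru_inter_right hN hRV (by simpa using hQid.postcomp j))
  have hRX : R ∈ X :=
    hXsumm.mem_of_factorsThru_id (hLoc.factorsThru_of_factorsThru hN hR.1 hR.2 hRid)
  have hQN : Q ∈ N := hN.two_of_three₂₃ _ hT₂ (hLoc.subset hRX) (hLoc.perpL_subset hW₂)
  exact hN.two_of_three₁₂ _ hT₁ (hLoc.perpR_subset hW₁) hQN

end IsNLocalizationTriple

theorem statement_8 (N U X V : Set T) (hN : IsTriangulatedSub N)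
    (hLoc : IsNLocalizationTriple N U X V) (hVC : VerdierCondition N U X V)
    (hXsumm : ClosedUnderSummands X)
    (A B : T) (hA : A ∈ U ∩ V) (hB : B ∈ U ∩ V) (s : A ⟶ B)
    (C₀ : T) (g : B ⟶ C₀) (h : C₀ ⟶ A⟦(1 : ℤ)⟧)
    (hT : Triangle.mk s g h ∈ (distTriang T)) :
    C₀ ∈ N ↔
      ∃ t : B ⟶ A, FactorsThru X (𝟙 A - s ≫ t) ∧ FactorsThru X (𝟙 B - t ≫ s) := by
  refine ⟨hVC A B C₀ s g h hT hA hB, fun ⟨t, hAt, hBt⟩ => ?_⟩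
  exact hN.mem_of_inverse_modulo (hLoc.closedUnderSummands hN hXsumm) hT t
    (hAt.mono hLoc.subset) (hBt.mono hLoc.subset)

end VerdierPaper
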